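/- Let S be a complete RN module over ℝ with base (Ω, F, P) and let D ∈ F̃ with D ⊂ H(S) and P(D) > 0 be such that Rank_{D'}(S) < 2 for every D' ∈ F̃ with D' ⊂ D and P(D') > 0. Then δ_D(ε) = I_D for every ε ∈ L⁰(F,ℝ) with ε ≥ 0 and 0 < ε ≤ 2 on D. (This is the statement that δ_{H(S)\G(S)}(ε) = I_{H(S)\G(S)} whenever P(H(S)\G(S)) > 0.) -/

import Mathlib

/-!
Let `x, y ∈ S(1)` with `D ⊆ B_{xy}`, so that `‖x‖ = ‖y‖ = 1` on `D`. A relation `a x + b y = θ`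
gives `|a| = |b|`, `|a| ‖x + y‖ = |a - b|` and `|a| ‖x - y‖ = |a + b|` on `D`; as `‖x - y‖ > 0` on
`D`, this forces `a = b = 0` wherever `‖x + y‖ > 0`. Thus `x` and `y` are `L⁰`-independent on
`D ∩ [‖x + y‖ > 0]`, which the rank hypothesis makes null: `‖(x + y)/2‖ = 0` on `D`, and every
element of the set defining `δ_D(ε)` is `I_D`. Since `L⁰` has no greatest element, a set contained
in `{I_D}` that has an infimum is `{I_D}` itself.
-/

open MeasureTheory Filter Set

noncomputable section

namespace RNM

variable {Ω : Type*} [MeasurableSpace Ω]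

/-- `L⁰(F, ℝ)`: equivalence classes of real random variables mod a.e. equality. -/
abbrev L0 (μ : Measure Ω) : Type _ := Ω →ₘ[μ] ℝ

open Classical in
/-- The equivalence class of the indicator function of a (measurable) set. -/
noncomputable def ind (μ : Measure Ω) (A : Set Ω) : L0 μ :=
  if h : MeasurableSet A then
    AEEqFun.mk (A.indicator fun _ => (1 : ℝ)) (aestronglyMeasurable_const.indicator h)
  else 0

/-- The constant function, as an element of `L⁰`. -/
noncomputable def cst (μ : Measure Ω) (r : ℝ) : L0 μ := AEEqFun.const Ω r

/-- `A ⊂ B` modulo null sets. -/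
def aeSub (μ : Measure Ω) (A B : Set Ω) : Prop := μ (A \ B) = 0

/-- `A = B` modulo null sets. -/
def aeEqS (μ : Measure Ω) (A B : Set Ω) : Prop := μ ((A \ B) ∪ (B \ A)) = 0

variable {μ : Measure Ω} {S : Type*} [AddCommGroup S]

/-- The axioms of a random normed module over ℝ with base `(Ω, F, μ)`: `S` is a left module
over the algebra `L⁰(F,ℝ)` (with module multiplication `sm`) and `nrm` is an `L⁰`-norm. -/
structure IsRNModule (μ : Measure Ω) (sm : L0 μ → S → S) (nrm : S → L0 μ) : Prop where
  smul_add : ∀ ξ x y, sm ξ (x + y) = sm ξ x + sm ξ y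
  add_smul : ∀ ξ η x, sm (ξ + η) x = sm ξ x + sm η x
  mul_smul : ∀ ξ η x, sm (ξ * η) x = sm ξ (sm η x)
  one_smul : ∀ x, sm 1 x = x
  nrm_nonneg : ∀ x, 0 ≤ nrm x
  nrm_smul : ∀ ξ x, nrm (sm ξ x) = |ξ| * nrm x
  nrm_add : ∀ x y, nrm (x + y) ≤ nrm x + nrm y
  nrm_eq_zero : ∀ x, nrm x = 0 → x = 0

/-- `x` and `y` are `L⁰`-independent on `F`. -/
def Indep (sm : L0 μ → S → S) (x y : S) (F : Set Ω) : Prop :=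
  ∀ ξ η : L0 μ, sm (ξ * ind μ F) x + sm (η * ind μ F) y = 0 →
    ξ * ind μ F = 0 ∧ η * ind μ F = 0

/-- `Rank_D(S) ≥ 2`. -/
def RankGe2 (sm : L0 μ → S → S) (D : Set Ω) : Prop := ∃ x y : S, Indep sm x y D

/-- `A_x = [‖x‖ > 0]`. -/
def Aset (nrm : S → L0 μ) (x : S) : Set Ω := {ω | 0 < (nrm x) ω}

/-- `A_{xy} = A_x ∩ A_y`. -/
def Axy (nrm : S → L0 μ) (x y : S) : Set Ω := Aset nrm x ∩ Aset nrm y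

/-- `B_{xy} = A_{xy} ∩ A_{x-y}`. -/
def Bxy (nrm : S → L0 μ) (x y : S) : Set Ω := Axy nrm x y ∩ Aset nrm (x - y)

/-- `H` is (a representative of) the support `H(S) = [⋁{‖x‖ : x ∈ S} > 0]`. -/
def IsSupport (nrm : S → L0 μ) (H : Set Ω) : Prop :=
  MeasurableSet H ∧ (∀ x : S, aeSub μ (Aset nrm x) H) ∧
    ∀ B : Set Ω, MeasurableSet B → aeSub μ B H → 0 < μ B →
      ∃ x : S, 0 < μ (B ∩ Aset nrm x)

/-- A sequence in `S` is Cauchy for the topology of convergence in probability. -/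
def CauchyInProb (μ : Measure Ω) (nrm : S → L0 μ) (u : ℕ → S) : Prop :=
  ∀ ε : ℝ, 0 < ε →
    Tendsto (fun p : ℕ × ℕ => μ {ω | ε ≤ |(nrm (u p.1 - u p.2)) ω|}) atTop (nhds 0)

/-- `u n → x` in probability (i.e. `‖u n - x‖ → 0` in probability). -/
def TendstoInProb (μ : Measure Ω) (nrm : S → L0 μ) (u : ℕ → S) (x : S) : Prop :=
  ∀ ε : ℝ, 0 < ε →
    Tendsto (fun n => μ {ω | ε ≤ |(nrm (u n - x)) ω|}) atTop (nhds 0)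

/-- Completeness of a random normed module. -/
def CompleteRN (μ : Measure Ω) (nrm : S → L0 μ) : Prop :=
  ∀ u : ℕ → S, CauchyInProb μ nrm u → ∃ x : S, TendstoInProb μ nrm u x

/-- The random unit sphere `S(1)`. -/
def sphere (nrm : S → L0 μ) : Set S :=
  {x | ∃ A : Set Ω, MeasurableSet A ∧ 0 < μ A ∧ nrm x = ind μ A}

/-- The random closed unit ball `U(1)`. -/
def ball (nrm : S → L0 μ) : Set S := {x | nrm x ≤ 1}

/-- `ε` is an admissible random convexity parameter on `D`: `ε ≥ 0` and `0 < ε ≤ 2` on `D`. -/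
def Admissible (μ : Measure Ω) (D : Set Ω) (ε : L0 μ) : Prop :=
  0 ≤ ε ∧ ∀ᵐ ω ∂μ, ω ∈ D → 0 < ε ω ∧ ε ω ≤ 2

/-- midpoint `(x+y)/2`. -/
def mid (μ : Measure Ω) (sm : L0 μ → S → S) (x y : S) : S := sm (cst μ (1/2)) (x + y)

/-- The set whose infimum (in the a.s. order of `L⁰`) is the modulus of random
convexity `δ_D(ε)`. -/
def modSet (μ : Measure Ω) (sm : L0 μ → S → S) (nrm : S → L0 μ) (D : Set Ω) (ε : L0 μ) :
    Set (L0 μ) :=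
  {z | ∃ x ∈ sphere nrm, ∃ y ∈ sphere nrm, aeSub μ D (Bxy nrm x y) ∧
    ε * ind μ D ≤ ind μ D * nrm (x - y) ∧
    z = ind μ D - ind μ D * nrm (mid μ sm x y)}

/-- `S` is random uniformly convex: `δ_{H(S)}(ε) > 0` on `H(S)` for every admissible `ε`. -/
def RandomUniformlyConvex (μ : Measure Ω) (sm : L0 μ → S → S) (nrm : S → L0 μ)
    (H : Set Ω) : Prop :=
  ∀ ε : L0 μ, Admissible μ H ε → ∀ d : L0 μ, IsGLB (modSet μ sm nrm H ε) d →
    ∀ᵐ ω ∂μ, ω ∈ H → 0 < d ω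

/-- `G` is (a representative of) `G(S)`. -/
def IsGSet (μ : Measure Ω) (sm : L0 μ → S → S) (H G : Set Ω) : Prop :=
  MeasurableSet G ∧ aeSub μ G H ∧ 0 < μ G ∧ RankGe2 sm G ∧
    ∀ D : Set Ω, MeasurableSet D → aeSub μ D (H \ G) → 0 < μ D → ¬ RankGe2 sm D

lemma aeSub_iff_ae {A B : Set Ω} : aeSub μ A B ↔ ∀ᵐ ω ∂μ, ω ∈ A → ω ∈ B := by
  simp only [aeSub, ae_iff, Classical.not_imp]
  rfl

lemma abs_one_L0 : |(1 : L0 μ)| = 1 := by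
  refine AEEqFun.ext ?_
  filter_upwards [AEEqFun.coeFn_abs (1 : L0 μ), AEEqFun.coeFn_one (β := ℝ) (μ := μ)]
    with ω habs hone
  rw [habs, hone, Pi.one_apply, abs_one]

lemma coeFn_ind {A : Set Ω} (hA : MeasurableSet A) : ⇑(ind μ A) =ᵐ[μ] A.indicator 1 := by
  rw [ind, dif_pos hA]
  exact AEEqFun.coeFn_mk _ _

lemma ae_mul_ind_eq_indicator (ξ : L0 μ) {F : Set Ω} (hF : MeasurableSet F) :
    ∀ᵐ ω ∂μ, (ξ * ind μ F) ω = F.indicator ξ ω := by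
  filter_upwards [AEEqFun.coeFn_mul ξ _, coeFn_ind hF] with ω hmul hind
  rw [hmul, Pi.mul_apply, hind]
  by_cases hω : ω ∈ F <;> simp [hω]

lemma mul_ind_eq_zero_iff (ξ : L0 μ) {F : Set Ω} (hF : MeasurableSet F) :
    ξ * ind μ F = 0 ↔ ∀ᵐ ω ∂μ, ω ∈ F → ξ ω = 0 := by
  rw [AEEqFun.ext_iff]
  refine eventually_congr ?_
  filter_upwards [ae_mul_ind_eq_indicator ξ hF, AEEqFun.coeFn_zero (β := ℝ) (μ := μ)]
    with ω hmul hzero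
  rw [hmul, hzero, Pi.zero_apply]
  by_cases hω : ω ∈ F <;> simp [hω]

lemma ae_abs_mul_eq_abs_mul {f g k l : L0 μ} (h : |f| * g = |k| * l) :
    ∀ᵐ ω ∂μ, |f ω| * g ω = |k ω| * l ω := by
  filter_upwards [AEEqFun.coeFn_mul |f| g, AEEqFun.coeFn_mul |k| l, AEEqFun.coeFn_abs f,
    AEEqFun.coeFn_abs k, AEEqFun.ext_iff.mp h] with ω hfg hkl hf hk hω
  rwa [hfg, hkl, Pi.mul_apply, Pi.mul_apply, hf, hk] at hω

lemma not_add_one_le_self [NeZero μ] (d : L0 μ) : ¬ d + 1 ≤ d := by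
  intro h
  have hfalse : ∀ᵐ ω ∂μ, False := by
    filter_upwards [AEEqFun.coeFn_le.mpr h, AEEqFun.coeFn_add d 1,
      AEEqFun.coeFn_one (β := ℝ) (μ := μ)] with ω hle hadd hone
    rw [hadd, Pi.add_apply, hone, Pi.one_apply] at hle
    linarith
  exact hfalse.exists.elim fun _ => id

lemma eq_of_isGLB_of_subset_singleton [NeZero μ] {s : Set (L0 μ)} {c d : L0 μ}
    (hs : s ⊆ {c}) (hd : IsGLB s d) : d = c := by
  rcases Set.subset_singleton_iff_eq.mp hs with rfl | rfl
  · exact absurd (hd.2 (by simp) : d + 1 ≤ d) (not_add_one_le_self d)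
  · exact hd.unique isGLB_singleton

lemma measurableSet_Aset {E : Type*} (nrm : E → L0 μ) (x : E) : MeasurableSet (Aset nrm x) :=
  measurableSet_lt measurable_const (nrm x).measurable

lemma ae_nrm_eq_one_of_mem_sphere {E : Type*} {nrm : E → L0 μ} {x : E} (hx : x ∈ sphere nrm) :
    ∀ᵐ ω ∂μ, 0 < nrm x ω → nrm x ω = 1 := by
  obtain ⟨A, hA, -, hxA⟩ := hx
  filter_upwards [hxA ▸ coeFn_ind hA] with ω hω hpos
  rw [hω] at hpos ⊢
  by_cases hωA : ω ∈ A <;> simp_all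

lemma eq_zero_of_abs_mul_eq_abs_mul {a b p r s : ℝ} (hp : 0 < p) (hr : 0 < r) (hs : 0 < s)
    (h₁ : |a| * p = |b| * p) (h₂ : |a| * r = |a - b| * p) (h₃ : |a| * s = |a + b| * p) :
    a = 0 ∧ b = 0 := by
  have hab : |a| = |b| := mul_right_cancel₀ hp.ne' h₁
  have ha : a = 0 := by
    rcases abs_eq_abs.mp hab with rfl | rfl
    · simpa [hr.ne'] using h₂
    · simpa [hs.ne'] using h₃
  exact ⟨ha, abs_eq_zero.mp (by rw [← hab, ha, abs_zero])⟩

section RNModule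

variable {sm : L0 μ → S → S} {nrm : S → L0 μ}

lemma IsRNModule.sub_smul (h : IsRNModule μ sm nrm) (a b : L0 μ) (x : S) :
    sm (a - b) x = sm a x - sm b x :=
  (AddMonoidHom.mk' (sm · x) (h.add_smul · · x)).map_sub a b

lemma IsRNModule.smul_sub (h : IsRNModule μ sm nrm) (a : L0 μ) (x y : S) :
    sm a (x - y) = sm a x - sm a y :=
  (AddMonoidHom.mk' (sm a) (h.smul_add a)).map_sub x y

lemma IsRNModule.neg_smul (h : IsRNModule μ sm nrm) (a : L0 μ) (x : S) : sm (-a) x = -sm a x :=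
  (AddMonoidHom.mk' (sm · x) (h.add_smul · · x)).map_neg a

lemma IsRNModule.nrm_neg (h : IsRNModule μ sm nrm) (x : S) : nrm (-x) = nrm x :=
  calc nrm (-x) = nrm (sm (-1) x) := by rw [h.neg_smul, h.one_smul]
    _ = nrm x := by rw [h.nrm_smul, abs_neg, abs_one_L0, one_mul]

lemma IsRNModule.abs_mul_nrm_eq_of_smul_add_smul_eq_zero (h : IsRNModule μ sm nrm)
    {a b : L0 μ} {x y : S} (hab : sm a x + sm b y = 0) :
    |a| * nrm x = |b| * nrm y ∧ |a| * nrm (x + y) = |a - b| * nrm y ∧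
      |a| * nrm (x - y) = |a + b| * nrm y := by
  have hax : sm a x = -sm b y := eq_neg_of_add_eq_zero_left hab
  refine ⟨?_, ?_, ?_⟩
  · rw [← h.nrm_smul, ← h.nrm_smul, hax, h.nrm_neg]
  · rw [← h.nrm_smul, ← h.nrm_smul, h.smul_add, hax, h.sub_smul]
    abel_nf
  · rw [← h.nrm_smul, ← h.nrm_smul, h.smul_sub, hax, h.add_smul, ← h.nrm_neg]
    abel_nf

lemma IsRNModule.ae_eq_zero_of_smul_add_smul_eq_zero (h : IsRNModule μ sm nrm) {F : Set Ω}
    {x y : S} (hF : ∀ᵐ ω ∂μ, ω ∈ F → nrm x ω = nrm y ω ∧ 0 < nrm y ω ∧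
      0 < nrm (x + y) ω ∧ 0 < nrm (x - y) ω)
    {a b : L0 μ} (hab : sm a x + sm b y = 0) : ∀ᵐ ω ∂μ, ω ∈ F → a ω = 0 ∧ b ω = 0 := by
  obtain ⟨e₁, e₂, e₃⟩ := h.abs_mul_nrm_eq_of_smul_add_smul_eq_zero hab
  filter_upwards [hF, ae_abs_mul_eq_abs_mul e₁, ae_abs_mul_eq_abs_mul e₂,
    ae_abs_mul_eq_abs_mul e₃, AEEqFun.coeFn_sub a b, AEEqFun.coeFn_add a b]
    with ω hω h₁ h₂ h₃ hsub hadd hωF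
  obtain ⟨hxy, hy, hplus, hminus⟩ := hω hωF
  rw [hxy] at h₁
  rw [hsub, Pi.sub_apply] at h₂
  rw [hadd, Pi.add_apply] at h₃
  exact eq_zero_of_abs_mul_eq_abs_mul hy hplus hminus h₁ h₂ h₃

lemma IsRNModule.indep_of_ae (h : IsRNModule μ sm nrm) {F : Set Ω} (hFm : MeasurableSet F)
    {x y : S} (hF : ∀ᵐ ω ∂μ, ω ∈ F → nrm x ω = nrm y ω ∧ 0 < nrm y ω ∧
      0 < nrm (x + y) ω ∧ 0 < nrm (x - y) ω) :
    Indep sm x y F := by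
  intro ξ η hξη
  have hzero := h.ae_eq_zero_of_smul_add_smul_eq_zero hF hξη
  rw [mul_ind_eq_zero_iff _ hFm, mul_ind_eq_zero_iff _ hFm]
  constructor
  · filter_upwards [hzero, ae_mul_ind_eq_indicator ξ hFm] with ω h0 hind hω
    simpa [hind, hω] using (h0 hω).1
  · filter_upwards [hzero, ae_mul_ind_eq_indicator η hFm] with ω h0 hind hω
    simpa [hind, hω] using (h0 hω).2

lemma IsRNModule.ae_nrm_add_eq_zero_of_rank_lt_two (h : IsRNModule μ sm nrm) {D : Set Ω}
    (hDm : MeasurableSet D)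
    (hrk : ∀ D' : Set Ω, MeasurableSet D' → aeSub μ D' D → 0 < μ D' → ¬ RankGe2 sm D')
    {x y : S} (hx : x ∈ sphere nrm) (hy : y ∈ sphere nrm) (hD : aeSub μ D (Bxy nrm x y)) :
    ∀ᵐ ω ∂μ, ω ∈ D → nrm (x + y) ω = 0 := by
  set F := D ∩ Aset nrm (x + y)
  have hFm : MeasurableSet F := hDm.inter (measurableSet_Aset nrm _)
  have hindep : Indep sm x y F := by
    refine h.indep_of_ae hFm ?_
    filter_upwards [aeSub_iff_ae.mp hD, ae_nrm_eq_one_of_mem_sphere hx,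
      ae_nrm_eq_one_of_mem_sphere hy] with ω hB hx₁ hy₁ hωF
    obtain ⟨⟨hxpos, hypos⟩, hsub⟩ := hB hωF.1
    exact ⟨by rw [hx₁ hxpos, hy₁ hypos], hypos, hωF.2, hsub⟩
  have hFnull : μ F = 0 := by
    by_contra hF
    exact hrk F hFm (aeSub_iff_ae.mpr (ae_of_all _ fun _ => And.left))
      (pos_iff_ne_zero.mpr hF) ⟨x, y, hindep⟩
  filter_upwards [measure_eq_zero_iff_ae_notMem.mp hFnull,
    AEEqFun.coeFn_le.mpr (h.nrm_nonneg (x + y)), AEEqFun.coeFn_zero (β := ℝ) (μ := μ)]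
    with ω hωF hnonneg hzero hωD
  rw [hzero] at hnonneg
  exact le_antisymm (not_lt.mp fun hpos => hωF ⟨hωD, hpos⟩) hnonneg

lemma IsRNModule.modSet_subset_singleton (h : IsRNModule μ sm nrm) {D : Set Ω}
    (hDm : MeasurableSet D)
    (hrk : ∀ D' : Set Ω, MeasurableSet D' → aeSub μ D' D → 0 < μ D' → ¬ RankGe2 sm D')
    (ε : L0 μ) : modSet μ sm nrm D ε ⊆ {ind μ D} := by
  rintro z ⟨x, hx, y, hy, hD, -, rfl⟩
  have hmid : ind μ D * nrm (mid μ sm x y) = 0 := by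
    rw [mul_comm, mul_ind_eq_zero_iff _ hDm, mid, h.nrm_smul]
    filter_upwards [AEEqFun.coeFn_mul |cst μ (1 / 2)| (nrm (x + y)),
      h.ae_nrm_add_eq_zero_of_rank_lt_two hDm hrk hx hy hD] with ω hmul hzero hωD
    rw [hmul, Pi.mul_apply, hzero hωD, mul_zero]
  rw [hmid, sub_zero, Set.mem_singleton_iff]

end RNModule

theorem modulus_eq_ind_of_rank_lt_two_general {Ω : Type*} [MeasurableSpace Ω] (μ : Measure Ω)
    [IsProbabilityMeasure μ] {S : Type*} [AddCommGroup S]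
    (sm : L0 μ → S → S) (nrm : S → L0 μ) (hRN : IsRNModule μ sm nrm)
    (D : Set Ω) (hDm : MeasurableSet D)
    (hrk : ∀ D' : Set Ω, MeasurableSet D' → aeSub μ D' D → 0 < μ D' → ¬ RankGe2 sm D')
    (ε : L0 μ) :
    ∀ d : L0 μ, IsGLB (modSet μ sm nrm D ε) d → d = ind μ D :=
  fun _ hd => eq_of_isGLB_of_subset_singleton (hRN.modSet_subset_singleton hDm hrk ε) hd

/-- **Corollary 2.1.** On a set `D` of positive probability on which the quasi-rank of `S`
is strictly less than 2 (on every positive-probability subset), the modulus of random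
convexity equals `I_D`:  `δ_D(ε) = I_D` for every admissible `ε`. -/
theorem modulus_eq_ind_of_rank_lt_two {Ω : Type*} [MeasurableSpace Ω] (μ : Measure Ω)
    [IsProbabilityMeasure μ] {S : Type*} [AddCommGroup S]
    (sm : L0 μ → S → S) (nrm : S → L0 μ) (hRN : IsRNModule μ sm nrm)
    (hcomp : CompleteRN μ nrm) (H : Set Ω) (hH : IsSupport nrm H)
    (D : Set Ω) (hDm : MeasurableSet D) (hDH : aeSub μ D H) (hDpos : 0 < μ D)
    (hrk : ∀ D' : Set Ω, MeasurableSet D' → aeSub μ D' D → 0 < μ D' → ¬ RankGe2 sm D')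
    (ε : L0 μ) (hε : Admissible μ D ε) :
    ∀ d : L0 μ, IsGLB (modSet μ sm nrm D ε) d → d = ind μ D :=
  modulus_eq_ind_of_rank_lt_two_general μ sm nrm hRN D hDm hrk ε

end RNM
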